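/- arXiv:2503.21039 — 5 statements merged into one kernel-verified Lean document; each statement's English description precedes it below -/
import Mathlib

section
/- Let G=(N,E) be a finite directed graph and γ∈𝒫(N×N) such that γ=γ[q₀] for some path profile q₀. Then there exists a path profile q∈𝒫(Path(G)) with γ[q]=γ that is supported on simple paths (paths that do not repeat any node). -/
open scoped ENNReal NNReal

namespace Congestion

variable {N : Type*}

/-- A path in the directed graph on `N` with edge set `E`: a nonempty list of nodes
whose consecutive pairs are edges. -/
structure GPath (E : Set (N × N)) where
  first : N
  rest : List N
  chain : List.Chain (fun x y => (x, y) ∈ E) first rest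

namespace GPath

variable {E : Set (N × N)}

/-- The list of nodes of a path. -/
def nodes (p : GPath E) : List N := p.first :: p.rest

/-- The final node of a path. -/
def last (p : GPath E) : N := p.nodes.getLast (List.cons_ne_nil _ _)

/-- The list of directed edges traversed by a path, with multiplicity. -/
def edges (p : GPath E) : List (N × N) := p.nodes.zip p.rest

/-- The `ξ`-length of a path. -/
noncomputable def len (ξ : N × N → ℝ≥0) (p : GPath E) : ℝ≥0∞ :=
  (p.edges.map fun e => (ξ e : ℝ≥0∞)).sum

end GPath

/-- The paths from `x` to `y`. -/
abbrev PathsXY (E : Set (N × N)) (x y : N) := {p : GPath E // p.first = x ∧ p.last = y}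

/-- The induced (possibly infinite) distance from `x` to `y`. -/
noncomputable def gdist (E : Set (N × N)) (ξ : N × N → ℝ≥0) (x y : N) : ℝ≥0∞ :=
  ⨅ p : PathsXY E x y, p.1.len ξ

/-- The transport plan of a path profile. -/
noncomputable def plan {E : Set (N × N)} (q : GPath E → ℝ≥0∞) (x y : N) : ℝ≥0∞ :=
  ∑' p : PathsXY E x y, q p.1

/-- The edge flow of a path profile (edges counted with multiplicity). -/
noncomputable def flow [DecidableEq N] {E : Set (N × N)} (q : GPath E → ℝ≥0∞) (e : N × N) : ℝ≥0∞ :=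
  ∑' p : GPath E, q p * (p.edges.count e : ℝ≥0∞)


lemma sublist_pair_decomp {α : Type*} {x : α} :
    ∀ {l : List α}, List.Sublist [x, x] l → ∃ a b c : List α, l = a ++ x :: b ++ x :: c := by
  intro l h
  induction l with
  | nil => simp at h
  | cons y t ih =>
    rcases List.cons_sublist_cons'.1 h with h' | ⟨rfl, h'⟩
    · obtain ⟨a, b, c, rfl⟩ := ih h'
      exact ⟨y :: a, b, c, rfl⟩
    · have hx : x ∈ t := h'.subset (by simp)
      obtain ⟨b, c, rfl⟩ := List.append_of_mem hx
      exact ⟨[], b, c, rfl⟩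

theorem exists_simple_list {α : Type*} {R : α → α → Prop} (l : List α) (hne : l ≠ [])
    (hc : l.Chain' R) :
    ∃ m : List α, m ≠ [] ∧ m.Chain' R ∧ m.Nodup ∧
      m.head? = l.head? ∧ m.getLast? = l.getLast? := by
  by_cases hnd : l.Nodup
  · exact ⟨l, hne, hc, hnd, rfl, rfl⟩
  · have : ∃ x, List.Sublist [x, x] l := by
      by_contra h
      push_neg at h
      exact hnd (List.nodup_iff_sublist.2 h)
    obtain ⟨x, hx⟩ := this
    obtain ⟨a, b, c, rfl⟩ := sublist_pair_decomp hx
    have hc1 : (a ++ x :: c).Chain' R := by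
      have hc' := hc
      rw [show a ++ x :: b ++ x :: c = a ++ x :: (b ++ x :: c) by simp,
        List.Chain', List.isChain_split] at hc'
      have h2 := hc'.2
      rw [show x :: (b ++ x :: c) = (x :: b) ++ x :: c by simp, List.isChain_split] at h2
      rw [List.Chain', List.isChain_split]
      exact ⟨hc'.1, h2.2⟩
    have hlen : (a ++ x :: c).length < (a ++ x :: b ++ x :: c).length := by
      simp
    obtain ⟨m, h1, h2, h3, h4, h5⟩ := exists_simple_list (a ++ x :: c) (by simp) hc1
    refine ⟨m, h1, h2, h3, ?_, ?_⟩
    · rw [h4]; simp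
    · rw [h5]
      rw [List.getLast?_append_cons, show a ++ x :: b ++ x :: c = (a ++ x :: b) ++ x :: c by simp,
        List.getLast?_append_cons]
termination_by l.length

lemma exists_simple_path {E : Set (N × N)} (p : GPath E) :
    ∃ p' : GPath E, p'.nodes.Nodup ∧ p'.first = p.first ∧ p'.last = p.last := by
  have hc : p.nodes.Chain' fun x y => (x, y) ∈ E := p.chain
  obtain ⟨m, hne, hcm, hnd, hh, hl⟩ :=
    exists_simple_list p.nodes (by simp [GPath.nodes]) hc
  have hm : m.head hne :: m.tail = m := List.cons_head_tail hne
  have hcm' : List.Chain (fun x y => (x, y) ∈ E) (m.head hne) m.tail := by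
    rw [← hm] at hcm; exact hcm
  refine ⟨⟨m.head hne, m.tail, hcm'⟩, ?_, ?_, ?_⟩
  · show (m.head hne :: m.tail).Nodup
    rw [hm]; exact hnd
  · have : m.head? = some p.first := by
      rw [hh]; simp [GPath.nodes]
    rw [List.head?_eq_head hne] at this
    exact Option.some.inj this
  · show (m.head hne :: m.tail).getLast _ = p.last
    have h1 : m.getLast? = some (m.getLast hne) := List.getLast?_eq_getLast hne
    have h2 : p.nodes.getLast? = some p.last :=
      List.getLast?_eq_getLast (List.cons_ne_nil _ _)
    rw [hl, h2] at h1
    have : (m.head hne :: m.tail).getLast (List.cons_ne_nil _ _) = m.getLast hne := by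
      congr 1 <;> try rw [hm]
    rw [this]
    exact (Option.some.inj h1).symm

/-- Any transport plan induced by some path profile is also induced by a path profile
supported on simple paths (paths with no repeated nodes). -/
theorem exists_simple_profile
    {N : Type*} [Fintype N] (E : Set (N × N))
    (γ : N × N → ℝ≥0∞) (q₀ : GPath E → ℝ≥0∞) (hq₀ : ∑' p : GPath E, q₀ p = 1)
    (hγ : ∀ x y : N, plan q₀ x y = γ (x, y)) :
    ∃ q : GPath E → ℝ≥0∞, (∑' p : GPath E, q p = 1) ∧ (∀ x y : N, plan q x y = γ (x, y)) ∧
      ∀ p : GPath E, 0 < q p → p.nodes.Nodup := by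
  choose s hnd hf hl using fun p : GPath E => exists_simple_path p
  refine ⟨fun p' => ∑' z : s ⁻¹' {p'}, q₀ z, ?_, ?_, ?_⟩
  · rw [ENNReal.tsum_fiberwise]; exact hq₀
  · intro x y
    rw [← hγ x y]
    set S : PathsXY E x y → PathsXY E x y :=
      fun w => ⟨s w.1, by rw [hf, hl]; exact w.2⟩ with hS
    have key : ∀ pxy : PathsXY E x y,
        (∑' z : s ⁻¹' {pxy.1}, q₀ z) = ∑' w : S ⁻¹' {pxy}, q₀ (w : PathsXY E x y).1 := by
      intro pxy
      let e : (S ⁻¹' {pxy}) ≃ (s ⁻¹' {pxy.1}) :=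
        ⟨fun w => ⟨w.1.1, congrArg Subtype.val (Set.mem_singleton_iff.1 w.2)⟩,
          fun z => ⟨⟨z.1,
            by rw [← hf z.1, Set.mem_singleton_iff.1 z.2]; exact pxy.2.1,
            by rw [← hl z.1, Set.mem_singleton_iff.1 z.2]; exact pxy.2.2⟩,
            Subtype.ext (Set.mem_singleton_iff.1 z.2)⟩,
          fun w => Subtype.ext (Subtype.ext rfl),
          fun z => Subtype.ext rfl⟩
      exact (Equiv.tsum_eq e (fun z : s ⁻¹' {pxy.1} => q₀ z)).symm
    calc (∑' pxy : PathsXY E x y, ∑' z : s ⁻¹' {pxy.1}, q₀ z)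
        = ∑' pxy : PathsXY E x y, ∑' w : S ⁻¹' {pxy}, q₀ (w : PathsXY E x y).1 := by
          exact tsum_congr key
      _ = ∑' w : PathsXY E x y, q₀ w.1 :=
          ENNReal.tsum_fiberwise (fun w : PathsXY E x y => q₀ w.1) S
  · intro p hp
    have : ∃ z : s ⁻¹' {p}, q₀ z ≠ 0 := by
      by_contra h
      push_neg at h
      exact hp.ne' (ENNReal.tsum_eq_zero.2 h)
    obtain ⟨z, _⟩ := this
    rw [← Set.mem_singleton_iff.1 z.2]
    exact hnd z.1


end Congestion
end

section
/- Let G=(N,E) be a finite directed graph and i:E→[0,∞). For every node x with div i(x)>0 there exists a path ω starting at x and ending at some node y with div i(y)<0 such that i(e)>0 for every edge e of ω. -/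
open scoped ENNReal NNReal

namespace Congestion

variable {N : Type*}

/-- The divergence of a nonnegative edge flow, as a real-valued function on nodes. -/
noncomputable def divNN {N : Type*} [Fintype N] (i : N × N → ℝ≥0) (x : N) : ℝ :=
  (∑ y : N, (i (x, y) : ℝ)) - ∑ y : N, (i (y, x) : ℝ)

/-- From any node with positive divergence there is a path, along edges of positive flow,
to a node with negative divergence. -/
theorem exists_path_to_negative_divergence
    {N : Type*} [Fintype N] (E : Set (N × N)) (i : N × N → ℝ≥0)
    (hsupp : ∀ e : N × N, e ∉ E → i e = 0) (x : N) (hx : 0 < divNN i x) :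
    ∃ p : GPath E, p.first = x ∧ divNN i p.last < 0 ∧ ∀ e ∈ p.edges, 0 < i e := by
  classical
  set r : N → N → Prop := fun y z => 0 < i (y, z) with hr
  -- From reachability via positive-flow edges we can build an actual path.
  have key : ∀ a b : N, Relation.ReflTransGen r a b →
      ∃ p : GPath E, p.first = a ∧ p.last = b ∧ ∀ e ∈ p.edges, 0 < i e := by
    intro a b h
    induction h using Relation.ReflTransGen.head_induction_on with
    | refl =>
        refine ⟨⟨b, [], List.Chain.nil⟩, rfl, rfl, ?_⟩
        intro e he
        simp [GPath.edges, GPath.nodes] at he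
    | @head a c hac _ ih =>
        obtain ⟨p, hp1, hp2, hp3⟩ := ih
        have hiac : 0 < i (a, c) := hac
        have haE : (a, p.first) ∈ E := by
          rw [hp1]
          by_contra hne
          rw [hsupp _ hne] at hiac
          exact lt_irrefl _ hiac
        refine ⟨⟨a, p.first :: p.rest, List.Chain.cons haE p.chain⟩, rfl, ?_, ?_⟩
        · simp only [GPath.last, GPath.nodes] at hp2 ⊢
          rw [List.getLast_cons (List.cons_ne_nil _ _)]
          exact hp2
        · intro e he
          have : e ∈ (a, p.first) :: p.edges := by
            simpa [GPath.edges, GPath.nodes, List.zip_cons_cons] using he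
          rcases List.mem_cons.mp this with h1 | h2
          · subst h1; rw [hp1]; exact hiac
          · exact hp3 e h2
  -- It suffices to find a reachable node with negative divergence.
  suffices h : ∃ y, Relation.ReflTransGen r x y ∧ divNN i y < 0 by
    obtain ⟨y, hy, hd⟩ := h
    obtain ⟨p, h1, h2, h3⟩ := key x y hy
    exact ⟨p, h1, h2 ▸ hd, h3⟩
  by_contra hcon
  push_neg at hcon
  set R : Finset N := Finset.univ.filter (fun y => Relation.ReflTransGen r x y) with hR
  have hxR : x ∈ R := by simp only [hR, Finset.mem_filter, Finset.mem_univ, true_and]; exact Relation.ReflTransGen.refl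
  have hmem : ∀ y, y ∈ R ↔ Relation.ReflTransGen r x y := by
    intro y; simp [hR]
  have hclosed : ∀ y ∈ R, ∀ z, 0 < i (y, z) → z ∈ R := by
    intro y hy z hz
    exact (hmem z).mpr ((hmem y).mp hy |>.tail hz)
  -- Sum of divergences over R is nonpositive.
  have hzero : ∀ y ∈ R, ∀ z ∉ R, (i (y, z) : ℝ) = 0 := by
    intro y hy z hz
    by_contra hne
    have : 0 < i (y, z) := lt_of_le_of_ne zero_le (by
      intro h; exact hne (by rw [← h]; simp))
    exact hz (hclosed y hy z this)
  have hout : ∑ y ∈ R, ∑ z : N, (i (y, z) : ℝ) = ∑ y ∈ R, ∑ z ∈ R, (i (y, z) : ℝ) := by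
    refine Finset.sum_congr rfl fun y hy => ?_
    rw [← Finset.sum_filter_add_sum_filter_not Finset.univ (fun z => z ∈ R)]
    have h1 : (Finset.univ.filter (fun z => z ∈ R)) = R := by
      ext z; simp
    have h2 : ∑ z ∈ Finset.univ.filter (fun z => ¬ z ∈ R), (i (y, z) : ℝ) = 0 := by
      refine Finset.sum_eq_zero fun z hz => ?_
      exact hzero y hy z (by simpa using hz)
    rw [h1, h2, add_zero]
  have hin : ∑ y ∈ R, ∑ z ∈ R, (i (z, y) : ℝ) ≤ ∑ y ∈ R, ∑ z : N, (i (z, y) : ℝ) := by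
    refine Finset.sum_le_sum fun y _ => ?_
    refine Finset.sum_le_sum_of_subset_of_nonneg (Finset.subset_univ R) ?_
    intro z _ _; positivity
  have hsum : ∑ y ∈ R, divNN i y ≤ 0 := by
    unfold divNN
    rw [Finset.sum_sub_distrib, hout, sub_nonpos]
    calc ∑ y ∈ R, ∑ z ∈ R, (i (y, z) : ℝ)
        = ∑ y ∈ R, ∑ z ∈ R, (i (z, y) : ℝ) := Finset.sum_comm
      _ ≤ ∑ y ∈ R, ∑ z : N, (i (z, y) : ℝ) := hin
  have hpos : 0 < ∑ y ∈ R, divNN i y := by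
    calc (0 : ℝ) < divNN i x := hx
      _ ≤ ∑ y ∈ R, divNN i y := by
          refine Finset.single_le_sum (fun y hy => ?_) hxR
          exact hcon y ((hmem y).mp hy)
  exact absurd (lt_of_lt_of_le hpos hsum) (lt_irrefl 0)

end Congestion
end

section
/- Let G=(N,E) be a finite directed graph and (i,ξ,u)∈ℝ^E_{≥0}×ℝ^E_{≥0}×ℝ^N with min_{e∈E} ξ(e)>0 and min{i,ξ−Du}=0 on E. Then the inner ξ-diameter of {i>0} is at most the ξ-diameter from {div i>0} to {div i<0}; that is, every geodesic contained in {i>0} has L_ξ-length at most max_{x∈{div i>0}, y∈{div i<0}} d_ξ(x,y). -/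
open scoped ENNReal NNReal

namespace Congestion

variable {N : Type*}

namespace GPath

variable {E : Set (N × N)}

/-- The (real-valued) `ξ`-length of a path. -/
def rlen (ξ : N × N → ℝ) (p : GPath E) : ℝ := (p.edges.map ξ).sum

end GPath

/-- The discrete gradient of `u` on the edge `e`. -/
def Dgrad (u : N → ℝ) (e : N × N) : ℝ := u e.2 - u e.1

/-- The real divergence of an edge flow. -/
noncomputable def divR [Fintype N] (i : N × N → ℝ) (x : N) : ℝ :=
  (∑ y : N, i (x, y)) - ∑ y : N, i (y, x)


/-- The (possibly infinite) induced distance from `x` to `y`. -/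
noncomputable def dof (E : Set (N × N)) (ξ : N × N → ℝ) (x y : N) : ℝ≥0∞ :=
  ⨅ p : PathsXY E x y, ENNReal.ofReal (p.1.rlen ξ)


section Aux

lemma tele (u : N → ℝ) (first : N) (rest : List N) :
    (((first :: rest).zip rest).map (Dgrad u)).sum
      = u ((first :: rest).getLast (List.cons_ne_nil _ _)) - u first := by
  induction rest generalizing first with
  | nil => simp
  | cons b t ih =>
    simp only [List.zip_cons_cons, List.map_cons, List.sum_cons]
    rw [List.getLast_cons (List.cons_ne_nil _ _), ih b]
    simp [Dgrad]

lemma chain_zip_mem {E : Set (N × N)} (first : N) (rest : List N)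
    (h : List.Chain (fun x y => (x, y) ∈ E) first rest) :
    ∀ e ∈ (first :: rest).zip rest, e ∈ E := by
  induction rest generalizing first with
  | nil => simp
  | cons b t ih =>
    cases h with
    | cons_cons hfb ht =>
      intro e he
      simp only [List.zip_cons_cons, List.mem_cons] at he
      rcases he with rfl | he
      · exact hfb
      · exact ih b ht e he

lemma exists_last_edge (first b : N) (t : List N) :
    ∃ z, (z, (first :: b :: t).getLast (List.cons_ne_nil _ _))
      ∈ (first :: b :: t).zip (b :: t) := by
  induction t generalizing first b with
  | nil => exact ⟨first, by simp⟩
  | cons c t ih =>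
    obtain ⟨z, hz⟩ := ih b c
    refine ⟨z, ?_⟩
    rw [List.getLast_cons (List.cons_ne_nil _ _), List.zip_cons_cons]
    exact List.mem_cons_of_mem _ hz

lemma exists_source [Fintype N] {E : Set (N × N)} {i ξ : N × N → ℝ} {u : N → ℝ}
    (hi : ∀ e ∈ E, 0 ≤ i e) (hsupp : ∀ e : N × N, e ∉ E → i e = 0)
    (hξ : ∀ e ∈ E, 0 < ξ e)
    (hcc : ∀ e ∈ E, min (i e) (ξ e - Dgrad u e) = 0)
    (a : N) (ha : ∃ w, 0 < i (a, w)) :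
    ∃ x, 0 < divR i x ∧ u x ≤ u a := by
  classical
  have hnn : ∀ e : N × N, 0 ≤ i e := by
    intro e
    by_cases he : e ∈ E
    · exact hi e he
    · exact (hsupp e he).ge
  have key : ∀ e : N × N, 0 < i e → ξ e = Dgrad u e ∧ e ∈ E := by
    intro e he
    have heE : e ∈ E := by
      by_contra h
      exact absurd (hsupp e h) (ne_of_gt he)
    have hm := hcc e heE
    rcases min_choice (i e) (ξ e - Dgrad u e) with h | h
    · rw [hm] at h; exact absurd h.symm (ne_of_gt he)
    · rw [hm] at h
      exact ⟨by linarith [h.symm], heE⟩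
  set T : Finset N := Finset.univ.filter (fun x => (∃ w, 0 < i (x, w)) ∧ u x ≤ u a) with hT
  have haT : a ∈ T := by simp [hT, ha]
  obtain ⟨x, hxT, hxmin⟩ := T.exists_min_image u ⟨a, haT⟩
  simp only [hT, Finset.mem_filter, Finset.mem_univ, true_and] at hxT
  obtain ⟨⟨w, hw⟩, hxa⟩ := hxT
  refine ⟨x, ?_, hxa⟩
  have hin : ∀ z, i (z, x) = 0 := by
    intro z
    by_contra hz
    have hz' : 0 < i (z, x) := lt_of_le_of_ne (hnn _) (Ne.symm hz)
    obtain ⟨hξeq, hzE⟩ := key _ hz'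
    have hzu : u z < u x := by
      have := hξ _ hzE
      simp only [Dgrad] at hξeq
      linarith [hξeq ▸ this]
    have hzT : z ∈ T := by
      simp only [hT, Finset.mem_filter, Finset.mem_univ, true_and]
      exact ⟨⟨x, hz'⟩, le_of_lt (lt_of_lt_of_le hzu hxa)⟩
    exact absurd (hxmin z hzT) (not_le.mpr hzu)
  have h1 : (∑ y : N, i (y, x)) = 0 := Finset.sum_eq_zero (fun y _ => hin y)
  have h2 : 0 < ∑ y : N, i (x, y) :=
    lt_of_lt_of_le hw (Finset.single_le_sum (fun y _ => hnn (x, y)) (Finset.mem_univ w))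
  simp only [divR, h1, sub_zero]
  exact h2

lemma exists_sink [Fintype N] {E : Set (N × N)} {i ξ : N × N → ℝ} {u : N → ℝ}
    (hi : ∀ e ∈ E, 0 ≤ i e) (hsupp : ∀ e : N × N, e ∉ E → i e = 0)
    (hξ : ∀ e ∈ E, 0 < ξ e)
    (hcc : ∀ e ∈ E, min (i e) (ξ e - Dgrad u e) = 0)
    (b : N) (hb : ∃ z, 0 < i (z, b)) :
    ∃ y, divR i y < 0 ∧ u b ≤ u y := by
  classical
  have hnn : ∀ e : N × N, 0 ≤ i e := by
    intro e
    by_cases he : e ∈ E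
    · exact hi e he
    · exact (hsupp e he).ge
  have key : ∀ e : N × N, 0 < i e → ξ e = Dgrad u e ∧ e ∈ E := by
    intro e he
    have heE : e ∈ E := by
      by_contra h
      exact absurd (hsupp e h) (ne_of_gt he)
    have hm := hcc e heE
    rcases min_choice (i e) (ξ e - Dgrad u e) with h | h
    · rw [hm] at h; exact absurd h.symm (ne_of_gt he)
    · rw [hm] at h
      exact ⟨by linarith [h.symm], heE⟩
  set T : Finset N := Finset.univ.filter (fun y => (∃ z, 0 < i (z, y)) ∧ u b ≤ u y) with hT
  have hbT : b ∈ T := by simp [hT, hb]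
  obtain ⟨y, hyT, hymax⟩ := T.exists_max_image u ⟨b, hbT⟩
  simp only [hT, Finset.mem_filter, Finset.mem_univ, true_and] at hyT
  obtain ⟨⟨z, hz⟩, hby⟩ := hyT
  refine ⟨y, ?_, hby⟩
  have hout : ∀ w, i (y, w) = 0 := by
    intro w
    by_contra hw
    have hw' : 0 < i (y, w) := lt_of_le_of_ne (hnn _) (Ne.symm hw)
    obtain ⟨hξeq, hwE⟩ := key _ hw'
    have hwu : u y < u w := by
      have := hξ _ hwE
      simp only [Dgrad] at hξeq
      linarith [hξeq ▸ this]
    have hwT : w ∈ T := by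
      simp only [hT, Finset.mem_filter, Finset.mem_univ, true_and]
      exact ⟨⟨y, hw'⟩, le_of_lt (lt_of_le_of_lt hby hwu)⟩
    exact absurd (hymax w hwT) (not_le.mpr hwu)
  have h1 : (∑ w : N, i (y, w)) = 0 := Finset.sum_eq_zero (fun w _ => hout w)
  have h2 : 0 < ∑ w : N, i (w, y) :=
    lt_of_lt_of_le hz (Finset.single_le_sum (fun w _ => hnn (w, y)) (Finset.mem_univ z))
  simp only [divR, h1, zero_sub, neg_neg]
  linarith

end Aux

/-- The inner ξ-diameter of the support of the flow is bounded by the ξ-diameter from the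
set of positive divergence to the set of negative divergence. -/
theorem inner_diameter_le_diameter
    {N : Type*} [Fintype N] (E : Set (N × N)) (i ξ : N × N → ℝ) (u : N → ℝ)
    (hi : ∀ e ∈ E, 0 ≤ i e) (hsupp : ∀ e : N × N, e ∉ E → i e = 0)
    (hξ : ∀ e ∈ E, 0 < ξ e)
    (hcc : ∀ e ∈ E, min (i e) (ξ e - Dgrad u e) = 0) :
    (⨆ p ∈ {p : GPath E | (∀ e ∈ GPath.edges p, 0 < i e) ∧
        ENNReal.ofReal (GPath.rlen ξ p) = dof E ξ p.first p.last},
      ENNReal.ofReal (GPath.rlen ξ p))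
    ≤ ⨆ x ∈ {x : N | 0 < divR i x}, ⨆ y ∈ {y : N | divR i y < 0}, dof E ξ x y := by
  classical
  have hnn : ∀ e : N × N, 0 ≤ i e := by
    intro e
    by_cases he : e ∈ E
    · exact hi e he
    · exact (hsupp e he).ge
  have key : ∀ e ∈ E, 0 < i e → ξ e = Dgrad u e := by
    intro e heE he
    have hm := hcc e heE
    rcases min_choice (i e) (ξ e - Dgrad u e) with h | h
    · rw [hm] at h; exact absurd h.symm (ne_of_gt he)
    · rw [hm] at h; linarith [h.symm]
  have hle : ∀ e ∈ E, Dgrad u e ≤ ξ e := by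
    intro e heE
    have hm := hcc e heE
    have := min_le_right (i e) (ξ e - Dgrad u e)
    rw [hm] at this
    linarith
  have rlen_ge : ∀ p : GPath E, u p.last - u p.first ≤ GPath.rlen ξ p := by
    intro p
    have hmem := chain_zip_mem p.first p.rest p.chain
    have hsum : ((p.edges).map (Dgrad u)).sum ≤ ((p.edges).map ξ).sum := by
      apply List.sum_le_sum
      intro e he
      exact hle e (hmem e he)
    have ht := tele u p.first p.rest
    simp only [GPath.edges, GPath.nodes] at hsum
    rw [ht] at hsum
    exact hsum
  refine iSup₂_le fun p hp => ?_
  obtain ⟨hpos, -⟩ := hp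
  have hmem := chain_zip_mem p.first p.rest p.chain
  have rlen_eq : GPath.rlen ξ p = u p.last - u p.first := by
    have hmc : (p.edges).map ξ = (p.edges).map (Dgrad u) := by
      apply List.map_congr_left
      intro e he
      exact key e (hmem e he) (hpos e he)
    have ht := tele u p.first p.rest
    simp only [GPath.rlen, GPath.edges, GPath.nodes] at hmc ⊢
    rw [hmc, ht]
    rfl
  rcases hrest : p.rest with _ | ⟨b, t⟩
  · have h0 : GPath.rlen ξ p = 0 := by
      simp [GPath.rlen, GPath.edges, GPath.nodes, hrest]
    simp [h0]
  · have hfe : (p.first, b) ∈ p.edges := by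
      simp [GPath.edges, GPath.nodes, hrest]
    have ha : ∃ w, 0 < i (p.first, w) := ⟨b, hpos _ hfe⟩
    obtain ⟨z, hz⟩ := exists_last_edge p.first b t
    have hze : (z, p.last) ∈ p.edges := by
      simp only [GPath.edges, GPath.nodes, GPath.last, hrest]
      exact hz
    have hb : ∃ z, 0 < i (z, p.last) := ⟨z, hpos _ hze⟩
    obtain ⟨x, hxdiv, hxu⟩ := exists_source hi hsupp hξ hcc p.first ha
    obtain ⟨y, hydiv, hyu⟩ := exists_sink hi hsupp hξ hcc p.last hb
    have h1 : ENNReal.ofReal (GPath.rlen ξ p) ≤ dof E ξ x y := by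
      refine le_iInf fun q => ?_
      apply ENNReal.ofReal_le_ofReal
      have hq := rlen_ge q.1
      rw [q.2.1, q.2.2] at hq
      rw [rlen_eq]
      linarith
    refine h1.trans ?_
    calc dof E ξ x y ≤ ⨆ y ∈ {y : N | divR i y < 0}, dof E ξ x y :=
          le_iSup₂ (f := fun y _ => dof E ξ x y) y hydiv
      _ ≤ _ := le_iSup₂ (f := fun x _ => ⨆ y ∈ {y : N | divR i y < 0}, dof E ξ x y) x hxdiv


end Congestion
end

section
/- Let E(j₁,j₂) = K₁(j₁)+K₂(j₂)+γ(j₁−j₁⁻)(j₂−j₂⁻)+γ(j₁−j₁⁺)(j₂−j₂⁺) where K_k(j)=½(j−j_k⁻)²+½(j−j_k⁺)²+εj. Suppose j_k⁺ ≤ j_k⁻ for k=1,2, with ℓ₁:=j₁⁻−j₁⁺ < ℓ₂:=j₂⁻−j₂⁺, ε>0, and γ∈[0,1)∪(1,∞). Then E has a unique minimizer over the rectangle [j₁⁺,j₁⁻]×[j₂⁺,j₂⁻]. -/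
/-!
Centering the rectangle turns `E` into a constant plus
`g(X, Y) = X² + Y² + 2γXY + ε(X + Y) = (1 + γ)/2 · u² + ε u - (γ - 1)/2 · v²`,
with `u = X + Y`, `v = X - Y`, on a box `[-a, a] × [-b, b]` with `a < b`.

For `γ < 1`, `g` is strictly convex. For `γ > 1` it is concave in `v`. Comparing `p` with `-p`
shows that a minimizer has `u ≤ 0`. On such a slice `|v|` is largest on the right edge `X = a` or
on the bottom edge `Y = -b`, so the minimum of `g` over the slice is the maximum of the values of
`g` on these two edge lines. That maximum is a strictly convex function of `u`, so every minimizer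
has the same `u`. This `u` is negative, since the maximum still decreases at `u = 0`, and a slice
with `u < 0` contains exactly one point where `|v|` is largest.
-/

namespace Congestion

/-- The quadratic energy `E(j₁,j₂) = K₁(j₁) + K₂(j₂) + γ(j₁−j₁⁻)(j₂−j₂⁻) + γ(j₁−j₁⁺)(j₂−j₂⁺)`,
where `K_k(j) = ½(j−j_k⁻)² + ½(j−j_k⁺)² + εj`. -/
noncomputable def Efun (j1p j1m j2p j2m ε γ : ℝ) (p : ℝ × ℝ) : ℝ :=
  ((1 / 2) * (p.1 - j1m) ^ 2 + (1 / 2) * (p.1 - j1p) ^ 2 + ε * p.1) +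
    ((1 / 2) * (p.2 - j2m) ^ 2 + (1 / 2) * (p.2 - j2p) ^ 2 + ε * p.2) +
    γ * (p.1 - j1m) * (p.2 - j2m) + γ * (p.1 - j1p) * (p.2 - j2p)

open Set

def centeredEnergy (ε γ : ℝ) (p : ℝ × ℝ) : ℝ :=
  p.1 ^ 2 + p.2 ^ 2 + 2 * γ * p.1 * p.2 + ε * (p.1 + p.2)

lemma Efun_eq_centeredEnergy_sub (j1p j1m j2p j2m ε γ : ℝ) (p : ℝ × ℝ) :
    Efun j1p j1m j2p j2m ε γ p =
      centeredEnergy ε γ (p - ((j1m + j1p) / 2, (j2m + j2p) / 2)) +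
        Efun j1p j1m j2p j2m ε γ ((j1m + j1p) / 2, (j2m + j2p) / 2) := by
  simp only [Efun, centeredEnergy, Prod.fst_sub, Prod.snd_sub]
  ring

lemma centeredEnergy_eq_sum_diff (ε γ : ℝ) (p : ℝ × ℝ) :
    centeredEnergy ε γ p =
      (1 + γ) / 2 * (p.1 + p.2) ^ 2 + ε * (p.1 + p.2) - (γ - 1) / 2 * (p.1 - p.2) ^ 2 := by
  simp only [centeredEnergy]
  ring

lemma centeredEnergy_neg (ε γ : ℝ) (p : ℝ × ℝ) :
    centeredEnergy ε γ (-p) = centeredEnergy ε γ p - 2 * ε * (p.1 + p.2) := by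
  simp only [centeredEnergy, Prod.fst_neg, Prod.snd_neg]
  ring

lemma strictConvexOn_centeredEnergy (ε : ℝ) {γ : ℝ} (hγ : |γ| < 1) :
    StrictConvexOn ℝ univ (centeredEnergy ε γ) := by
  refine ⟨convex_univ, fun x _ y _ hxy s t hs ht hst => ?_⟩
  obtain rfl : t = 1 - s := by linarith
  obtain ⟨hγl, hγu⟩ := abs_lt.mp hγ
  set du := x.1 - y.1 + (x.2 - y.2)
  set dv := x.1 - y.1 - (x.2 - y.2)
  have hd : du ≠ 0 ∨ dv ≠ 0 := by
    by_contra! h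
    exact hxy (Prod.ext (by linarith [h.1, h.2]) (by linarith [h.1, h.2]))
  have hQ : 0 < (1 + γ) / 2 * du ^ 2 + (1 - γ) / 2 * dv ^ 2 := by
    rcases hd with hd | hd
    · nlinarith [sq_pos_of_ne_zero hd, sq_nonneg dv]
    · nlinarith [sq_pos_of_ne_zero hd, sq_nonneg du]
  have hgap : s • centeredEnergy ε γ x + (1 - s) • centeredEnergy ε γ y
      - centeredEnergy ε γ (s • x + (1 - s) • y) =
        s * (1 - s) * ((1 + γ) / 2 * du ^ 2 + (1 - γ) / 2 * dv ^ 2) := by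
    simp only [du, dv, centeredEnergy, smul_eq_mul, Prod.fst_add, Prod.snd_add,
      Prod.smul_fst, Prod.smul_snd]
    ring
  nlinarith [mul_pos (mul_pos hs ht) hQ]

lemma strictConvexOn_sq_add_affine (c d : ℝ) :
    StrictConvexOn ℝ univ fun u : ℝ => u ^ 2 + c * u + d :=
  ((Even.strictConvexOn_pow even_two two_ne_zero).add_convexOn
    ((LinearMap.mul ℝ ℝ c).convexOn convex_univ)).add_const d

def edgeProfile (ε γ a b u : ℝ) : ℝ :=
  max (centeredEnergy ε γ (a, u - a)) (centeredEnergy ε γ (u + b, -b))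

lemma strictConvexOn_edgeProfile (ε γ a b : ℝ) :
    StrictConvexOn ℝ univ (edgeProfile ε γ a b) := by
  have right : (fun u => centeredEnergy ε γ (a, u - a)) =
      fun u => u ^ 2 + (2 * (γ - 1) * a + ε) * u + 2 * (1 - γ) * a ^ 2 := by
    funext u; simp only [centeredEnergy]; ring
  have bottom : (fun u => centeredEnergy ε γ (u + b, -b)) =
      fun u => u ^ 2 + (2 * (1 - γ) * b + ε) * u + 2 * (1 - γ) * b ^ 2 := by
    funext u; simp only [centeredEnergy]; ring
  have h := (strictConvexOn_sq_add_affine (2 * (γ - 1) * a + ε) (2 * (1 - γ) * a ^ 2)).sup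
    (strictConvexOn_sq_add_affine (2 * (1 - γ) * b + ε) (2 * (1 - γ) * b ^ 2))
  rwa [← right, ← bottom] at h

section Box

variable {a b ε γ : ℝ} {p : ℝ × ℝ}

lemma neg_mem_Icc_prod_Icc (hp : p ∈ Icc (-a) a ×ˢ Icc (-b) b) :
    -p ∈ Icc (-a) a ×ˢ Icc (-b) b := by
  obtain ⟨⟨hx₁, hx₂⟩, hy₁, hy₂⟩ := hp
  exact ⟨⟨neg_le_neg hx₂, neg_le.mp hx₁⟩, neg_le_neg hy₂, neg_le.mp hy₁⟩

lemma add_nonpos_of_isMinOn_centeredEnergy (hε : 0 < ε) (hp : p ∈ Icc (-a) a ×ˢ Icc (-b) b)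
    (hmin : IsMinOn (centeredEnergy ε γ) (Icc (-a) a ×ˢ Icc (-b) b) p) : p.1 + p.2 ≤ 0 := by
  have h := isMinOn_iff.mp hmin _ (neg_mem_Icc_prod_Icc hp)
  rw [centeredEnergy_neg] at h
  nlinarith

lemma edgeProfile_le_centeredEnergy (hγ : 1 ≤ γ) (hab : a ≤ b)
    (hp : p ∈ Icc (-a) a ×ˢ Icc (-b) b) (hu : p.1 + p.2 ≤ 0) :
    edgeProfile ε γ a b (p.1 + p.2) ≤ centeredEnergy ε γ p := by
  obtain ⟨⟨hx₁, hx₂⟩, hy₁, hy₂⟩ := hp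
  simp only [edgeProfile, centeredEnergy_eq_sum_diff]
  have hγ' : 0 ≤ γ - 1 := by linarith
  apply max_le
  · nlinarith [mul_nonneg (mul_nonneg hγ' (sub_nonneg.2 hx₂)) (by linarith : 0 ≤ a - p.2)]
  · nlinarith [mul_nonneg (mul_nonneg hγ' (by linarith : 0 ≤ p.2 + b)) (by linarith : 0 ≤ p.1 + b)]

lemma isMinOn_edgeProfile (hγ : 1 ≤ γ) (hab : a ≤ b) (hp : p ∈ Icc (-a) a ×ˢ Icc (-b) b)
    (hmin : IsMinOn (centeredEnergy ε γ) (Icc (-a) a ×ˢ Icc (-b) b) p) (hu : p.1 + p.2 ≤ 0) :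
    centeredEnergy ε γ p = edgeProfile ε γ a b (p.1 + p.2) ∧
      IsMinOn (edgeProfile ε γ a b) (Icc (-(a + b)) 0) (p.1 + p.2) := by
  have hle : edgeProfile ε γ a b (p.1 + p.2) ≤ centeredEnergy ε γ p :=
    edgeProfile_le_centeredEnergy hγ hab hp hu
  obtain ⟨⟨hx₁, hx₂⟩, hy₁, hy₂⟩ := hp
  have hge : ∀ w ∈ Icc (-(a + b)) 0, centeredEnergy ε γ p ≤ edgeProfile ε γ a b w := by
    rintro w ⟨hw₁, hw₂⟩
    rcases le_total (a - b) w with h | h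
    · exact (isMinOn_iff.mp hmin _ ⟨⟨by linarith, le_rfl⟩, by linarith, by linarith⟩).trans
        (le_max_left _ _)
    · exact (isMinOn_iff.mp hmin _ ⟨⟨by linarith, by linarith⟩, le_rfl, by linarith⟩).trans
        (le_max_right _ _)
  exact ⟨le_antisymm (hge _ ⟨by linarith, hu⟩) hle,
    isMinOn_iff.mpr fun w hw => hle.trans (hge w hw)⟩

lemma not_isMinOn_edgeProfile_zero (hε : 0 < ε) (hγ : 1 ≤ γ) (ha : 0 ≤ a) (hab : a < b) :
    ¬ IsMinOn (edgeProfile ε γ a b) (Icc (-(a + b)) 0) 0 := by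
  intro hmin
  set t := min ε (b - a) / 2 with ht
  have hmin_pos := lt_min hε (sub_pos.2 hab)
  have htε : t < ε := by linarith [min_le_left ε (b - a)]
  have htab : t < b - a := by linarith [min_le_right ε (b - a)]
  have htpos : 0 < t := by linarith
  have hdescent : edgeProfile ε γ a b (-t) < centeredEnergy ε γ (a, 0 - a) := by
    simp only [edgeProfile, centeredEnergy]
    apply max_lt
    · nlinarith [mul_pos htpos (sub_pos.2 htε),
        mul_nonneg (mul_nonneg (sub_nonneg.2 hγ) ha) htpos.le]
    · nlinarith [mul_pos htpos (sub_pos.2 htε),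
        mul_nonneg (mul_nonneg (sub_nonneg.2 hγ) (ha.trans hab.le)) (by linarith : 0 ≤ b - a - t),
        mul_nonneg (mul_nonneg (sub_nonneg.2 hγ) ha) (sub_nonneg.2 hab.le)]
  have h := isMinOn_iff.mp hmin (-t) ⟨by linarith, by linarith⟩
  exact (h.trans_lt hdescent).not_ge (le_max_left _ _)

lemma eq_or_eq_of_centeredEnergy_eq_edgeProfile (hγ : 1 < γ) (hab : a < b)
    (hp : p ∈ Icc (-a) a ×ˢ Icc (-b) b) (hu : p.1 + p.2 < 0)
    (h : centeredEnergy ε γ p = edgeProfile ε γ a b (p.1 + p.2)) : p.1 = a ∨ p.2 = -b := by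
  obtain ⟨⟨hx₁, hx₂⟩, hy₁, hy₂⟩ := hp
  rcases max_choice (centeredEnergy ε γ (a, p.1 + p.2 - a))
      (centeredEnergy ε γ (p.1 + p.2 + b, -b)) with hmax | hmax <;>
    rw [edgeProfile, hmax] at h <;> simp only [centeredEnergy] at h
  · have hpos : 0 < (γ - 1) * (a - p.2) := mul_pos (by linarith) (by linarith)
    have h' : (p.1 - a) * ((γ - 1) * (a - p.2)) = 0 := by linear_combination -h / 2
    exact Or.inl (by linarith [(mul_eq_zero.1 h').resolve_right hpos.ne'])
  · have hpos : 0 < (γ - 1) * (p.1 + b) := mul_pos (by linarith) (by linarith)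
    have h' : (p.2 + b) * ((γ - 1) * (p.1 + b)) = 0 := by linear_combination h / 2
    exact Or.inr (by linarith [(mul_eq_zero.1 h').resolve_right hpos.ne'])

lemma eq_of_isMinOn_centeredEnergy_of_one_lt {q : ℝ × ℝ} (hε : 0 < ε) (hγ : 1 < γ)
    (hab : a < b) (hp : p ∈ Icc (-a) a ×ˢ Icc (-b) b) (hq : q ∈ Icc (-a) a ×ˢ Icc (-b) b)
    (hpmin : IsMinOn (centeredEnergy ε γ) (Icc (-a) a ×ˢ Icc (-b) b) p)
    (hqmin : IsMinOn (centeredEnergy ε γ) (Icc (-a) a ×ˢ Icc (-b) b) q) : p = q := by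
  have hup := add_nonpos_of_isMinOn_centeredEnergy hε hp hpmin
  have huq := add_nonpos_of_isMinOn_centeredEnergy hε hq hqmin
  obtain ⟨hpE, hpI⟩ := isMinOn_edgeProfile hγ.le hab.le hp hpmin hup
  obtain ⟨hqE, hqI⟩ := isMinOn_edgeProfile hγ.le hab.le hq hqmin huq
  have hu : p.1 + p.2 = q.1 + q.2 :=
    ((strictConvexOn_edgeProfile ε γ a b).subset (subset_univ _) (convex_Icc _ _)).eq_of_isMinOn
      hpI hqI ⟨by linarith [hp.1.1, hp.2.1], hup⟩ ⟨by linarith [hq.1.1, hq.2.1], huq⟩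
  have hneg : p.1 + p.2 < 0 := hup.lt_of_ne fun h0 =>
    not_isMinOn_edgeProfile_zero hε hγ.le (by linarith [hp.1.1, hp.1.2]) hab (h0 ▸ hpI)
  obtain ⟨⟨hpx₁, hpx₂⟩, hpy₁, hpy₂⟩ := hp
  obtain ⟨⟨hqx₁, hqx₂⟩, hqy₁, hqy₂⟩ := hq
  rcases eq_or_eq_of_centeredEnergy_eq_edgeProfile hγ hab ⟨⟨hpx₁, hpx₂⟩, hpy₁, hpy₂⟩ hneg hpE
    with hp' | hp' <;>
  rcases eq_or_eq_of_centeredEnergy_eq_edgeProfile hγ hab ⟨⟨hqx₁, hqx₂⟩, hqy₁, hqy₂⟩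
    (hu ▸ hneg) hqE with hq' | hq' <;>
  exact Prod.ext (by linarith) (by linarith)

lemma eq_of_isMinOn_centeredEnergy {q : ℝ × ℝ} (hab : a < b) (hε : 0 < ε)
    (hγ : |γ| < 1 ∨ 1 < γ) (hp : p ∈ Icc (-a) a ×ˢ Icc (-b) b)
    (hq : q ∈ Icc (-a) a ×ˢ Icc (-b) b)
    (hpmin : IsMinOn (centeredEnergy ε γ) (Icc (-a) a ×ˢ Icc (-b) b) p)
    (hqmin : IsMinOn (centeredEnergy ε γ) (Icc (-a) a ×ˢ Icc (-b) b) q) : p = q := by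
  rcases hγ with hγ | hγ
  · exact ((strictConvexOn_centeredEnergy ε hγ).subset (subset_univ _)
      ((convex_Icc _ _).prod (convex_Icc _ _))).eq_of_isMinOn hpmin hqmin hp hq
  · exact eq_of_isMinOn_centeredEnergy_of_one_lt hε hγ hab hp hq hpmin hqmin

end Box

lemma isMinOn_centeredEnergy_sub_center {j1p j1m j2p j2m ε γ : ℝ} {p : ℝ × ℝ}
    (hp : p ∈ Icc j1p j1m ×ˢ Icc j2p j2m)
    (hmin : IsMinOn (Efun j1p j1m j2p j2m ε γ) (Icc j1p j1m ×ˢ Icc j2p j2m) p) :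
    let c : ℝ × ℝ := ((j1m + j1p) / 2, (j2m + j2p) / 2)
    let B := Icc (-((j1m - j1p) / 2)) ((j1m - j1p) / 2) ×ˢ
      Icc (-((j2m - j2p) / 2)) ((j2m - j2p) / 2)
    p - c ∈ B ∧ IsMinOn (centeredEnergy ε γ) B (p - c) := by
  intro c B
  have hmem : ∀ r : ℝ × ℝ, r ∈ B ↔ r + c ∈ Icc j1p j1m ×ˢ Icc j2p j2m := by
    intro r
    simp only [B, c, mem_prod, mem_Icc, Prod.fst_add, Prod.snd_add]
    constructor <;> rintro ⟨⟨_, _⟩, _, _⟩ <;> refine ⟨⟨?_, ?_⟩, ?_, ?_⟩ <;> linarith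
  refine ⟨(hmem _).2 (by rwa [sub_add_cancel]), isMinOn_iff.mpr fun r hr => ?_⟩
  have h := isMinOn_iff.mp hmin _ ((hmem r).1 hr)
  rw [Efun_eq_centeredEnergy_sub, Efun_eq_centeredEnergy_sub _ _ _ _ _ _ (r + c),
    add_sub_cancel_right] at h
  linarith

/-- If `j_k⁺ ≤ j_k⁻`, `ℓ₁ < ℓ₂`, `ε > 0` and `γ ∈ [0,1) ∪ (1,∞)`, the energy `E` has a
unique minimizer on the rectangle `[j₁⁺, j₁⁻] × [j₂⁺, j₂⁻]`. -/
theorem unique_minimizer_on_rectangle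
    (j1p j1m j2p j2m ε γ : ℝ)
    (h1 : j1p ≤ j1m) (h2 : j2p ≤ j2m)
    (hlen : j1m - j1p < j2m - j2p)
    (hε : 0 < ε) (hγ : (0 ≤ γ ∧ γ < 1) ∨ 1 < γ) :
    ∃! p : ℝ × ℝ, p ∈ Set.Icc j1p j1m ×ˢ Set.Icc j2p j2m ∧
      ∀ q ∈ Set.Icc j1p j1m ×ˢ Set.Icc j2p j2m,
        Efun j1p j1m j2p j2m ε γ p ≤ Efun j1p j1m j2p j2m ε γ q := by
  have hcont : Continuous (Efun j1p j1m j2p j2m ε γ) := by unfold Efun; fun_prop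
  obtain ⟨p, hpR, hpmin⟩ := (isCompact_Icc.prod isCompact_Icc).exists_isMinOn
    ⟨(j1p, j2p), ⟨le_rfl, h1⟩, le_rfl, h2⟩ hcont.continuousOn
  refine ⟨p, ⟨hpR, isMinOn_iff.mp hpmin⟩, fun q ⟨hqR, hqmin⟩ => ?_⟩
  obtain ⟨hq, hq'⟩ := isMinOn_centeredEnergy_sub_center hqR (isMinOn_iff.mpr hqmin)
  obtain ⟨hp, hp'⟩ := isMinOn_centeredEnergy_sub_center hpR hpmin
  have hγ' : |γ| < 1 ∨ 1 < γ := hγ.imp_left fun h => abs_lt.mpr ⟨by linarith [h.1], h.2⟩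
  exact sub_left_inj.mp (eq_of_isMinOn_centeredEnergy (by linarith) hε hγ' hq hp hq' hp')

end Congestion
end

section
/- Let G=(N,E) be a finite directed graph and suppose Γ⊆𝒫(N×N) is closed and contains at least one transport plan induced by a path profile. Then for any metric ξ:E→[0,∞) there exists a path profile q*∈𝒫(Path(G)) supported on geodesics of (G,ξ) such that γ[q*] minimizes γ ↦ ∑_{x,y∈N} d_ξ(x,y)γ(x,y) over Γ. -/
open scoped ENNReal NNReal

namespace Congestion

variable {N : Type*}

/-- Weight of a list of nodes. -/
noncomputable def W (ξ : N × N → ℝ≥0) (l : List N) : ℝ≥0∞ :=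
  ((l.zip l.tail).map fun e => (ξ e : ℝ≥0∞)).sum

@[simp] lemma W_nil (ξ : N × N → ℝ≥0) : W ξ ([] : List N) = 0 := rfl

@[simp] lemma W_single (ξ : N × N → ℝ≥0) (a : N) : W ξ [a] = 0 := rfl

lemma W_cons_cons (ξ : N × N → ℝ≥0) (a b : N) (l : List N) :
    W ξ (a :: b :: l) = (ξ (a, b) : ℝ≥0∞) + W ξ (b :: l) := rfl

lemma W_ne_top (ξ : N × N → ℝ≥0) (l : List N) : W ξ l ≠ ∞ := by
  unfold W
  generalize l.zip l.tail = m
  induction m with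
  | nil => simp
  | cons e m ih => simp [ih, ENNReal.add_ne_top]

lemma W_append (ξ : N × N → ℝ≥0) (u : List N) (x : N) (v : List N) :
    W ξ (u ++ x :: v) = W ξ (u ++ [x]) + W ξ (x :: v) := by
  induction u with
  | nil => simp
  | cons b u' ih =>
    cases u' with
    | nil => simp [W_cons_cons, add_assoc]
    | cons c u'' =>
      have h1 : (b :: c :: u'') ++ x :: v = b :: c :: (u'' ++ x :: v) := by simp
      have h2 : (b :: c :: u'') ++ [x] = b :: c :: (u'' ++ [x]) := by simp
      rw [h1, h2, W_cons_cons, W_cons_cons]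
      have := ih
      simp only [List.cons_append] at this
      rw [this, add_assoc]

lemma exists_dup {l : List N} (h : ¬ l.Nodup) :
    ∃ (a : N) (l₁ l₂ l₃ : List N), l = l₁ ++ a :: (l₂ ++ a :: l₃) := by
  induction l with
  | nil => exact absurd List.nodup_nil h
  | cons x xs ih =>
    by_cases hx : x ∈ xs
    · obtain ⟨s, t, rfl⟩ := List.append_of_mem hx
      exact ⟨x, [], s, t, by simp⟩
    · have hxs : ¬ xs.Nodup := by
        intro hn; exact h (List.nodup_cons.mpr ⟨hx, hn⟩)
      obtain ⟨a, l₁, l₂, l₃, rfl⟩ := ih hxs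
      exact ⟨a, x :: l₁, l₂, l₃, by simp⟩

lemma chain'_reduce (R : N → N → Prop) (ξ : N × N → ℝ≥0) :
    ∀ (n : ℕ) (l : List N), l.length ≤ n → l.Chain' R →
    ∃ m : List N, m.Chain' R ∧ m.Nodup ∧ m.head? = l.head? ∧
      m.getLast? = l.getLast? ∧ W ξ m ≤ W ξ l := by
  intro n
  induction n with
  | zero =>
    intro l hl hc
    have : l = [] := List.eq_nil_of_length_eq_zero (Nat.le_zero.mp hl)
    subst this
    exact ⟨[], List.isChain_nil, List.nodup_nil, rfl, rfl, le_rfl⟩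
  | succ n ih =>
    intro l hl hc
    by_cases hd : l.Nodup
    · exact ⟨l, hc, hd, rfl, rfl, le_rfl⟩
    · obtain ⟨a, l₁, l₂, l₃, rfl⟩ := exists_dup hd
      have hsplit := List.isChain_split.mp hc
      have hc2 : List.Chain' R ((a :: l₂) ++ a :: l₃) := by
        exact (by simpa using hsplit.2 : List.IsChain R ((a :: l₂) ++ a :: l₃))
      have hc3 : List.Chain' R (a :: l₃) := (List.isChain_split.mp hc2).2
      have hcm : List.Chain' R (l₁ ++ a :: l₃) := List.isChain_split.mpr ⟨hsplit.1, hc3⟩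
      have hlen : (l₁ ++ a :: l₃).length ≤ n := by
        simp only [List.length_append, List.length_cons] at hl ⊢
        omega
      obtain ⟨m, hmc, hmn, hmh, hml, hmw⟩ := ih (l₁ ++ a :: l₃) hlen hcm
      refine ⟨m, hmc, hmn, ?_, ?_, ?_⟩
      · rw [hmh]; cases l₁ <;> simp
      · rw [hml, List.getLast?_append_cons]
        have : l₁ ++ a :: (l₂ ++ a :: l₃) = l₁ ++ a :: l₂ ++ a :: l₃ := by simp
        rw [this, List.getLast?_append_cons]
      · refine hmw.trans ?_
        rw [W_append ξ l₁ a l₃, W_append ξ l₁ a (l₂ ++ a :: l₃)]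
        refine add_le_add_right ?_ _
        have : a :: (l₂ ++ a :: l₃) = (a :: l₂) ++ a :: l₃ := by simp
        rw [this, W_append ξ (a :: l₂) a l₃]
        exact le_add_self


variable {E : Set (N × N)}

lemma GPath.len_eq_W (ξ : N × N → ℝ≥0) (p : GPath E) : p.len ξ = W ξ p.nodes := rfl

lemma GPath.len_ne_top (ξ : N × N → ℝ≥0) (p : GPath E) : p.len ξ ≠ ∞ :=
  (GPath.len_eq_W ξ p) ▸ W_ne_top ξ p.nodes

lemma GPath.nodes_chain' (p : GPath E) :
    p.nodes.Chain' (fun x y => (x, y) ∈ E) := p.chain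

lemma GPath.nodes_injective : Function.Injective (GPath.nodes (E := E)) := by
  rintro ⟨a, r, hc⟩ ⟨a', r', hc'⟩ h
  simp only [GPath.nodes, List.cons.injEq] at h
  obtain ⟨rfl, rfl⟩ := h
  rfl

@[simp] lemma GPath.getLast?_nodes (p : GPath E) :
    p.nodes.getLast? = some p.last :=
  List.getLast?_eq_getLast_of_ne_nil (List.cons_ne_nil _ _)

/-- Any path can be replaced by a duplicate-free path with the same endpoints and
no greater length. -/
lemma exists_nodup_path (ξ : N × N → ℝ≥0) (p : GPath E) :
    ∃ p' : GPath E, p'.first = p.first ∧ p'.last = p.last ∧ p'.nodes.Nodup ∧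
      p'.len ξ ≤ p.len ξ := by
  obtain ⟨m, hmc, hmn, hmh, hml, hmw⟩ :=
    chain'_reduce (fun x y => (x, y) ∈ E) ξ p.nodes.length p.nodes le_rfl p.nodes_chain'
  have hh : m.head? = some p.first := by rw [hmh]; rfl
  obtain ⟨c, m', rfl⟩ : ∃ c m', m = c :: m' := by
    cases m with
    | nil => simp at hh
    | cons c m' => exact ⟨c, m', rfl⟩
  have hc : c = p.first := by simpa using hh
  refine ⟨⟨c, m', hmc⟩, hc, ?_, hmn, ?_⟩
  · have h1 : (⟨c, m', hmc⟩ : GPath E).nodes.getLast? = some p.last := by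
      rw [show (⟨c, m', hmc⟩ : GPath E).nodes = c :: m' from rfl, hml,
        GPath.getLast?_nodes]
    rw [GPath.getLast?_nodes] at h1
    exact Option.some.inj h1
  · rw [GPath.len_eq_W, GPath.len_eq_W]
    exact hmw

/-- If the distance is finite, a geodesic exists. -/
lemma exists_geodesic [Fintype N] (ξ : N × N → ℝ≥0) (x y : N)
    (h : gdist E ξ x y ≠ ∞) :
    ∃ p : GPath E, p.first = x ∧ p.last = y ∧ p.len ξ = gdist E ξ x y := by
  have hne : Nonempty (PathsXY E x y) := by
    by_contra hn
    rw [not_nonempty_iff] at hn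
    exact h (by simp [gdist, iInf_of_empty])
  classical
  set S : Set (GPath E) := {p | (p.first = x ∧ p.last = y) ∧ p.nodes.Nodup} with hS
  have hfinL : Set.Finite {l : List N | l.Nodup} := by
    haveI : Fintype {l : List N // l.Nodup} := fintypeNodupList
    exact (Set.finite_range (Subtype.val : {l : List N // l.Nodup} → List N)).subset
      (fun l hl => ⟨⟨l, hl⟩, rfl⟩)
  have hSfin : S.Finite := by
    have hpre : (GPath.nodes ⁻¹' {l : List N | l.Nodup} : Set (GPath E)).Finite :=
      hfinL.preimage (GPath.nodes_injective.injOn)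
    exact hpre.subset (fun p hp => hp.2)
  have hSne : S.Nonempty := by
    obtain ⟨p0⟩ := hne
    obtain ⟨p', h1, h2, h3, _⟩ := exists_nodup_path ξ p0.1
    exact ⟨p', ⟨⟨h1.trans p0.2.1, h2.trans p0.2.2⟩, h3⟩⟩
  obtain ⟨ps, hpsS, hmin⟩ := Set.exists_min_image S (GPath.len ξ) hSfin hSne
  refine ⟨ps, hpsS.1.1, hpsS.1.2, le_antisymm ?_ ?_⟩
  · apply le_iInf
    intro q
    obtain ⟨p', h1, h2, h3, h4⟩ := exists_nodup_path ξ q.1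
    exact (hmin p' ⟨⟨h1.trans q.2.1, h2.trans q.2.2⟩, h3⟩).trans h4
  · exact iInf_le _ (⟨ps, hpsS.1⟩ : PathsXY E x y)

/-- Existence of efficient geodesic profiles: if Γ is closed and contains a plan induced by a
path profile, then there is a path profile supported on geodesics whose plan minimizes the
Kantorovich functional over Γ. -/
theorem exists_efficient_geodesic_profile
    {N : Type*} [Fintype N] (E : Set (N × N)) (ξ : N × N → ℝ≥0)
    (Γ : Set (N × N → ℝ≥0∞)) (hclosed : IsClosed Γ)
    (hprob : ∀ γ ∈ Γ, ∑ e : N × N, γ e = 1)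
    (hne : ∃ q : GPath E → ℝ≥0∞, (∑' p : GPath E, q p = 1) ∧
      (fun e : N × N => plan q e.1 e.2) ∈ Γ) :
    ∃ q : GPath E → ℝ≥0∞, (∑' p : GPath E, q p = 1) ∧
      (∀ p : GPath E, 0 < q p → p.len ξ = gdist E ξ p.first p.last) ∧
      (fun e : N × N => plan q e.1 e.2) ∈ Γ ∧
      ∀ γ ∈ Γ, ∑ x : N, ∑ y : N, gdist E ξ x y * plan q x y
        ≤ ∑ x : N, ∑ y : N, gdist E ξ x y * γ (x, y) := by
  classical
  obtain ⟨q0, hq0sum, hq0Γ⟩ := hne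
  set d' : N × N → ℝ≥0∞ :=
    fun e => if gdist E ξ e.1 e.2 = ∞ then 0 else gdist E ξ e.1 e.2 with hd'
  have hd'top : ∀ e, d' e ≠ ∞ := by
    intro e
    simp only [hd']
    split
    · simp
    · assumption
  set Γ' : Set ((N × N) → ℝ≥0∞) :=
    Γ ∩ {γ | ∀ e : N × N, gdist E ξ e.1 e.2 = ∞ → γ e = 0} with hΓ'
  have hclosed' : IsClosed Γ' := by
    refine hclosed.inter ?_
    have hset : {γ : (N × N) → ℝ≥0∞ | ∀ e : N × N, gdist E ξ e.1 e.2 = ∞ → γ e = 0}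
        = ⋂ (e : N × N), ⋂ (_ : gdist E ξ e.1 e.2 = ∞), {γ | γ e = 0} := by
      ext γ; simp
    rw [hset]
    exact isClosed_iInter fun e => isClosed_iInter fun _ =>
      isClosed_eq (continuous_apply e) continuous_const
  have hempty : ∀ e : N × N, gdist E ξ e.1 e.2 = ∞ → IsEmpty (PathsXY E e.1 e.2) := by
    intro e he
    by_contra hn
    rw [not_isEmpty_iff] at hn
    obtain ⟨p⟩ := hn
    have hle : gdist E ξ e.1 e.2 ≤ p.1.len ξ := iInf_le _ p
    rw [he] at hle
    exact GPath.len_ne_top ξ p.1 (top_le_iff.mp hle)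
  have hγ0' : (fun e : N × N => plan q0 e.1 e.2) ∈ Γ' := by
    refine ⟨hq0Γ, ?_⟩
    intro e he
    haveI := hempty e he
    simp only [plan]
    exact tsum_empty
  have hK : IsCompact Γ' := hclosed'.isCompact
  set F' : ((N × N) → ℝ≥0∞) → ℝ≥0∞ :=
    fun γ => ∑ x : N, ∑ y : N, d' (x, y) * γ (x, y) with hF'
  have hF'cont : Continuous F' := by
    apply continuous_finset_sum
    intro x _
    apply continuous_finset_sum
    intro y _
    exact (ENNReal.continuous_const_mul (hd'top (x, y))).comp (continuous_apply (x, y))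
  obtain ⟨γs, hγsΓ', hγsmin⟩ := hK.exists_isMinOn ⟨_, hγ0'⟩ hF'cont.continuousOn
  have hγsΓ : γs ∈ Γ := hγsΓ'.1
  have key1 : ∀ γ ∈ Γ', (∑ x : N, ∑ y : N, gdist E ξ x y * γ (x, y)) = F' γ := by
    intro γ hγ
    refine Finset.sum_congr rfl fun x _ => Finset.sum_congr rfl fun y _ => ?_
    by_cases h : gdist E ξ x y = ∞
    · rw [hγ.2 (x, y) h, mul_zero, mul_zero]
    · simp only [hd']
      rw [if_neg h]
  have key2 : ∀ γ ∈ Γ, γ ∉ Γ' →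
      (∑ x : N, ∑ y : N, gdist E ξ x y * γ (x, y)) = ∞ := by
    intro γ hγ hγ'
    have hex : ∃ e : N × N, gdist E ξ e.1 e.2 = ∞ ∧ γ e ≠ 0 := by
      by_contra hcon
      push_neg at hcon
      exact hγ' ⟨hγ, fun e he => hcon e he⟩
    obtain ⟨e, he, hne0⟩ := hex
    have h1 : gdist E ξ e.1 e.2 * γ (e.1, e.2)
        ≤ ∑ x : N, ∑ y : N, gdist E ξ x y * γ (x, y) := by
      calc gdist E ξ e.1 e.2 * γ (e.1, e.2)
          ≤ ∑ y : N, gdist E ξ e.1 y * γ (e.1, y) :=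
            Finset.single_le_sum (f := fun y => gdist E ξ e.1 y * γ (e.1, y))
              (fun i _ => zero_le) (Finset.mem_univ e.2)
        _ ≤ _ :=
            Finset.single_le_sum (f := fun x => ∑ y : N, gdist E ξ x y * γ (x, y))
              (fun i _ => zero_le) (Finset.mem_univ e.1)
    rw [he, Prod.mk.eta, ENNReal.top_mul hne0] at h1
    exact top_le_iff.mp h1
  set S : Finset (N × N) := Finset.univ.filter (fun e => γs e ≠ 0) with hSdef
  have hgeo : ∀ e ∈ S, ∃ p : GPath E,
      p.first = e.1 ∧ p.last = e.2 ∧ p.len ξ = gdist E ξ e.1 e.2 := by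
    intro e heS
    refine exists_geodesic ξ e.1 e.2 fun htop => ?_
    exact (Finset.mem_filter.mp heS).2 (hγsΓ'.2 e htop)
  choose P hP1 hP2 hP3 using hgeo
  set q : GPath E → ℝ≥0∞ :=
    fun p => ∑ e ∈ S.attach, if p = P e.1 e.2 then γs e.1 else 0 with hq
  have hplan : ∀ x y : N, plan q x y = γs (x, y) := by
    intro x y
    simp only [plan, hq]
    rw [Summable.tsum_finsetSum (fun e _ => ENNReal.summable)]
    have h1 : ∀ e : {e // e ∈ S},
        (∑' p : PathsXY E x y, if p.1 = P e.1 e.2 then γs e.1 else 0)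
          = if e.1 = (x, y) then γs e.1 else 0 := by
      intro e
      by_cases hc : e.1 = (x, y)
      · rw [if_pos hc]
        have hmem : (P e.1 e.2).first = x ∧ (P e.1 e.2).last = y :=
          ⟨by rw [hP1 e.1 e.2, hc], by rw [hP2 e.1 e.2, hc]⟩
        calc (∑' p : PathsXY E x y, if p.1 = P e.1 e.2 then γs e.1 else 0)
            = ∑' p : PathsXY E x y, if p = ⟨P e.1 e.2, hmem⟩ then γs e.1 else 0 :=
              tsum_congr fun p => by
                congr 1
                exact propext (@Subtype.ext_iff _ _ p ⟨P e.1 e.2, hmem⟩).symm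
          _ = γs e.1 := tsum_ite_eq _ _
      · rw [if_neg hc]
        have hz : ∀ p : PathsXY E x y, (if p.1 = P e.1 e.2 then γs e.1 else 0) = 0 := by
          intro p
          rw [if_neg]
          intro hpe
          apply hc
          have ha := hP1 e.1 e.2
          have hb := hP2 e.1 e.2
          rw [← hpe] at ha hb
          calc (e.1 : N × N) = (e.1.1, e.1.2) := by rw [Prod.mk.eta]
            _ = (x, y) := by rw [← ha, ← hb, p.2.1, p.2.2]
        rw [tsum_congr hz, tsum_zero]
    rw [Finset.sum_congr rfl (fun e _ => h1 e)]
    rw [Finset.sum_attach S (fun e => if e = (x, y) then γs e else 0)]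
    rw [Finset.sum_ite_eq' S (x, y) γs]
    by_cases hxy : (x, y) ∈ S
    · rw [if_pos hxy]
    · rw [if_neg hxy]
      simp only [hSdef, Finset.mem_filter, Finset.mem_univ, true_and, not_not] at hxy
      exact hxy.symm
  have hsum : ∑' p : GPath E, q p = 1 := by
    simp only [hq]
    rw [Summable.tsum_finsetSum (fun e _ => ENNReal.summable)]
    rw [Finset.sum_congr rfl (fun (e : {e // e ∈ S}) _ => tsum_ite_eq (P e.1 e.2) (fun _ => γs e.1))]
    rw [Finset.sum_attach S (fun e => γs e), hSdef, Finset.sum_filter_ne_zero]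
    exact hprob γs hγsΓ
  refine ⟨q, hsum, ?_, ?_, ?_⟩
  · intro p hp
    obtain ⟨e, _, hne0⟩ := Finset.exists_ne_zero_of_sum_ne_zero hp.ne'
    have hpe : p = P e.1 e.2 := by
      by_contra hcon
      rw [if_neg hcon] at hne0
      exact hne0 rfl
    subst hpe
    rw [hP1, hP2]
    exact hP3 e.1 e.2
  · have hfun : (fun e : N × N => plan q e.1 e.2) = γs := by
      funext e
      rw [hplan e.1 e.2, Prod.mk.eta]
    rw [hfun]
    exact hγsΓ
  · intro γ hγ
    have lhs_eq : (∑ x : N, ∑ y : N, gdist E ξ x y * plan q x y) = F' γs := by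
      rw [← key1 γs hγsΓ']
      exact Finset.sum_congr rfl fun x _ => Finset.sum_congr rfl fun y _ => by rw [hplan]
    rw [lhs_eq]
    by_cases hγ' : γ ∈ Γ'
    · rw [key1 γ hγ']
      exact hγsmin hγ'
    · rw [key2 γ hγ hγ']
      exact le_top


end Congestion
end
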